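/- arXiv:0905.3197 — 2 statements merged into one kernel-verified Lean document; each statement's English description precedes it below -/
import Mathlib

section
/- For any finite simple graph G, any positive integer s, and any vertex x_i ∈ V(G), one has π_{2s}(G, x_i) = π_s(G_i', x'), where G_i' is obtained from G by adding a new vertex x' joined to x_i by a single edge. -/
open scoped BigOperators

/-- A single pebbling move on a simple graph: remove two pebbles from `u`
and add one pebble on an adjacent vertex `v`. -/
def PebMove {V : Type*} [DecidableEq V] (G : SimpleGraph V) (D D' : V → ℕ) : Prop :=
  ∃ u v, G.Adj u v ∧ 2 ≤ D u ∧
    D' = fun w => if w = u then D u - 2 else if w = v then D v + 1 else D w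

/-- `D'` is reachable from `D`: some sequence of pebbling moves starting at `D`
produces a distribution containing `D'`. -/
def Reaches {V : Type*} [DecidableEq V] (G : SimpleGraph V) (D D' : V → ℕ) : Prop :=
  ∃ D'', Relation.ReflTransGen (PebMove G) D D'' ∧ ∀ v, D' v ≤ D'' v

/-- Total number of pebbles of a distribution. -/
def pebTotal {V : Type*} [Fintype V] (D : V → ℕ) : ℕ := ∑ v, D v

/-- The pebbling number of a set `S` of target distributions on `G`:
the least `N` (possibly `∞`) such that every member of `S` is reachable from
every distribution with at least `N` pebbles in total. -/
noncomputable def pebSet {V : Type*} [Fintype V] [DecidableEq V] (G : SimpleGraph V)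
    (S : Set (V → ℕ)) : ℕ∞ :=
  sInf {N : ℕ∞ | ∀ D₀ : V → ℕ, N ≤ (pebTotal D₀ : ℕ∞) → ∀ D ∈ S, Reaches G D₀ D}

/-- The pebbling number of a single target distribution. -/
noncomputable def peb {V : Type*} [Fintype V] [DecidableEq V] (G : SimpleGraph V)
    (D : V → ℕ) : ℕ∞ :=
  pebSet G {D}

/-- The distribution with `t` pebbles on `v` and none elsewhere. -/
def unitDist {V : Type*} [DecidableEq V] (t : ℕ) (v : V) : V → ℕ :=
  fun w => if w = v then t else 0


/-- The graph `Gᵢ'` obtained from `G` by adding a single new vertex `none`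
joined by a single edge to `xᵢ`. -/
def extendGraph {V : Type*} (G : SimpleGraph V) (xi : V) : SimpleGraph (Option V) where
  Adj a b :=
    (∃ u v, a = some u ∧ b = some v ∧ G.Adj u v) ∨
    (a = some xi ∧ b = none) ∨ (a = none ∧ b = some xi)
  symm := by
    constructor
    rintro a b (⟨u, v, rfl, rfl, h⟩ | ⟨rfl, rfl⟩ | ⟨rfl, rfl⟩)
    · exact Or.inl ⟨v, u, rfl, rfl, h.symm⟩
    · exact Or.inr (Or.inr ⟨rfl, rfl⟩)
    · exact Or.inr (Or.inl ⟨rfl, rfl⟩)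
  loopless := by
    constructor
    rintro a (⟨u, v, rfl, h, hadj⟩ | ⟨h1, h2⟩ | ⟨h1, h2⟩) <;> simp_all

/-- The map `π` sending a distribution on `Gᵢ' × H` to a distribution on
`G × H`, replacing each pebble on `(x', y)` by two pebbles on `(xᵢ, y)`. -/
def projDist {V W : Type*} [DecidableEq V] (xi : V) (D : Option V × W → ℕ) :
    V × W → ℕ :=
  fun p =>
    if p.1 = xi then D (some p.1, p.2) + 2 * D (none, p.2) else D (some p.1, p.2)

/-!
A pebble on `x'` is worth exactly two pebbles on `xᵢ`: flattening a distribution on `Gᵢ'` by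
trading each pebble on `x'` for two on `xᵢ` turns every move of `Gᵢ'` into a move of `G` or a
loss of pebbles, and conversely `k` pebbles on `x'` can stand in for `2k` pebbles on `xᵢ`, since
a move sequence of `G` started with `f` extra pebbles ends at most `|f|` pebbles short of what
it reaches from the full distribution. Hence `2s` pebbles reach `xᵢ` in `G` from the
flattening of a distribution exactly when `s` pebbles reach `x'` from it in `Gᵢ'`, and the
flattening never has fewer pebbles.
-/

section Moves

variable {V : Type*} [DecidableEq V] {G : SimpleGraph V}

def moveDist (D : V → ℕ) (u v : V) : V → ℕ :=
  fun w => if w = u then D u - 2 else if w = v then D v + 1 else D w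

theorem pebMove_iff {D D' : V → ℕ} :
    PebMove G D D' ↔ ∃ u v, G.Adj u v ∧ 2 ≤ D u ∧ D' = moveDist D u v :=
  Iff.rfl

theorem moveDist_mono {D E : V → ℕ} (h : D ≤ E) (u v : V) : moveDist D u v ≤ moveDist E u v := by
  intro w
  have hu : D u ≤ E u := h u
  have hv : D v ≤ E v := h v
  have hw : D w ≤ E w := h w
  simp only [moveDist]
  split_ifs <;> subst_vars <;> omega

theorem moveDist_add {D : V → ℕ} {u : V} (hu : 2 ≤ D u) (f : V → ℕ) (v : V) :
    moveDist (D + f) u v = moveDist D u v + f := by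
  funext w
  simp only [moveDist, Pi.add_apply]
  split_ifs <;> subst_vars <;> omega

theorem moveDist_comp {W : Type*} [DecidableEq W] {e : V → W} (he : e.Injective)
    (E : W → ℕ) (u v : V) : moveDist E (e u) (e v) ∘ e = moveDist (E ∘ e) u v := by
  funext w
  simp [moveDist, he.eq_iff]

theorem Reaches.of_le {D D' : V → ℕ} (h : D' ≤ D) : Reaches G D D' :=
  ⟨D, .refl, h⟩

theorem reaches_of_reflTransGen_of_le {D D' E : V → ℕ}
    (h : Relation.ReflTransGen (PebMove G) D D') (hle : D ≤ E) : Reaches G E D' := by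
  induction h with
  | refl => exact .of_le hle
  | tail _ hmove ih =>
    obtain ⟨F, hF, hle'⟩ := ih
    obtain ⟨u, w, hadj, hu, rfl⟩ := pebMove_iff.1 hmove
    exact ⟨moveDist F u w, hF.tail (pebMove_iff.2 ⟨u, w, hadj, hu.trans (hle' u), rfl⟩),
      moveDist_mono hle' u w⟩

theorem Reaches.trans {D D' D'' : V → ℕ} (h : Reaches G D D') (h' : Reaches G D' D'') :
    Reaches G D D'' := by
  obtain ⟨F, hF, hle⟩ := h
  obtain ⟨F', hF', hle'⟩ := h'
  obtain ⟨F'', hF'', hle''⟩ := reaches_of_reflTransGen_of_le hF' hle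
  exact ⟨F'', hF.trans hF'', fun v => (hle' v).trans (hle'' v)⟩

theorem exists_reflTransGen_add_le_of_adj {u v : V} (huv : G.Adj u v) (m : ℕ) {D : V → ℕ}
    (hD : 2 * m ≤ D u) : ∃ D', Relation.ReflTransGen (PebMove G) D D' ∧ D v + m ≤ D' v := by
  induction m generalizing D with
  | zero => exact ⟨D, .refl, le_rfl⟩
  | succ m ih =>
    have hvu : v ≠ u := huv.ne.symm
    obtain ⟨D', hD', hle⟩ := ih (D := moveDist D u v) (by simp [moveDist]; omega)
    refine ⟨D', .head (pebMove_iff.2 ⟨u, v, huv, by omega, rfl⟩) hD', ?_⟩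
    simp only [moveDist, hvu, if_false, if_true] at hle
    omega

end Moves

section Totals

variable {V : Type*} [Fintype V]

theorem pebTotal_add (D f : V → ℕ) : pebTotal (D + f) = pebTotal D + pebTotal f :=
  Finset.sum_add_distrib

theorem le_pebTotal (D : V → ℕ) (v : V) : D v ≤ pebTotal D :=
  Finset.single_le_sum (fun _ _ => Nat.zero_le _) (Finset.mem_univ v)

theorem pebTotal_unitDist [DecidableEq V] (t : ℕ) (x : V) : pebTotal (unitDist t x) = t := by
  simp [pebTotal, unitDist]

theorem pebTotal_option (E : Option V → ℕ) : pebTotal E = E none + pebTotal (E ∘ some) :=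
  Fintype.sum_option E

end Totals

section Deficiency

variable {V : Type*} [Fintype V] [DecidableEq V] {G : SimpleGraph V}

theorem exists_reflTransGen_le_add {E E' : V → ℕ} (h : Relation.ReflTransGen (PebMove G) E E')
    {D f : V → ℕ} (hE : E ≤ D + f) :
    ∃ D' f', Relation.ReflTransGen (PebMove G) D D' ∧ E' ≤ D' + f' ∧
      pebTotal f' ≤ pebTotal f := by
  induction h using Relation.ReflTransGen.head_induction_on generalizing D f with
  | refl => exact ⟨D, f, .refl, hE, le_rfl⟩
  | @head B C hmove _ ih =>
    obtain ⟨u, w, hadj, hu, rfl⟩ := pebMove_iff.1 hmove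
    by_cases hDu : 2 ≤ D u
    · obtain ⟨D', f', hDD', hle, htot⟩ := ih (D := moveDist D u w) (f := f)
        (moveDist_add hDu f w ▸ moveDist_mono hE u w)
      exact ⟨D', f', .head (pebMove_iff.2 ⟨u, w, hadj, hDu, rfl⟩) hDD', hle, htot⟩
    · -- `D` cannot move from `u`, so `f` holds a pebble there; shifting it to `w` pays for the move.
      have hBu := hE u
      obtain ⟨g, rfl⟩ : ∃ g, f = g + unitDist 1 u :=
        ⟨f - unitDist 1 u, by
          funext x
          simp only [Pi.add_apply, Pi.sub_apply, unitDist] at hBu ⊢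
          split_ifs <;> subst_vars <;> omega⟩
      have huw : u ≠ w := hadj.ne
      obtain ⟨D', f', hDD', hle, htot⟩ := ih (D := D) (f := g + unitDist 1 w) (by
        intro x
        have hBw := hE w; have hBx := hE x
        simp only [moveDist, Pi.add_apply, unitDist] at hBu hBw hBx ⊢
        by_cases hxu : x = u
        · subst hxu; simp only [if_true, huw, if_false] at hBu ⊢; omega
        · by_cases hxw : x = w
          · subst hxw; simp only [if_true, hxu, if_false] at hBw ⊢; omega
          · simp only [hxu, hxw, if_false] at hBx ⊢; omega)
      refine ⟨D', f', hDD', hle, htot.trans ?_⟩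
      simp only [pebTotal_add, pebTotal_unitDist, le_rfl]

end Deficiency

section Extension

variable {V : Type*}

def liftDist (c : ℕ) (D : V → ℕ) : Option V → ℕ :=
  fun o => o.elim c D

theorem pebTotal_liftDist [Fintype V] (c : ℕ) (D : V → ℕ) :
    pebTotal (liftDist c D) = c + pebTotal D :=
  pebTotal_option _

variable [DecidableEq V] {G : SimpleGraph V} {xi : V}

def flatDist (xi : V) (E : Option V → ℕ) : V → ℕ :=
  E ∘ some + unitDist (2 * E none) xi

theorem liftDist_moveDist (c : ℕ) (D : V → ℕ) (u v : V) :
    liftDist c (moveDist D u v) = moveDist (liftDist c D) (some u) (some v) := by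
  funext o
  cases o <;> simp [liftDist, moveDist]

theorem reflTransGen_extendGraph_liftDist (c : ℕ) {D D' : V → ℕ}
    (h : Relation.ReflTransGen (PebMove G) D D') :
    Relation.ReflTransGen (PebMove (extendGraph G xi)) (liftDist c D) (liftDist c D') := by
  induction h with
  | refl => exact .refl
  | tail _ hmove ih =>
    obtain ⟨u, v, hadj, hu, rfl⟩ := pebMove_iff.1 hmove
    exact ih.tail (pebMove_iff.2
      ⟨some u, some v, Or.inl ⟨u, v, rfl, rfl, hadj⟩, hu, liftDist_moveDist c _ u v⟩)

theorem flatDist_liftDist_zero (D : V → ℕ) : flatDist xi (liftDist 0 D) = D := by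
  funext v
  simp [flatDist, liftDist, unitDist]

theorem PebMove.reaches_flatDist {E E' : Option V → ℕ} (h : PebMove (extendGraph G xi) E E') :
    Reaches G (flatDist xi E) (flatDist xi E') := by
  obtain ⟨u, w, hadj, hu, rfl⟩ := pebMove_iff.1 h
  rcases hadj with ⟨a, b, rfl, rfl, hab⟩ | ⟨rfl, rfl⟩ | ⟨rfl, rfl⟩
  · have hflat : flatDist xi (moveDist E (some a) (some b)) = moveDist (flatDist xi E) a b := by
      have hnone : moveDist E (some a) (some b) none = E none := by simp [moveDist]
      rw [flatDist, flatDist, moveDist_comp (Option.some_injective V), hnone,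
        moveDist_add (D := E ∘ some) hu]
    refine ⟨_, .single (pebMove_iff.2 ⟨a, b, hab, ?_, hflat⟩), fun _ => le_rfl⟩
    exact hu.trans (Nat.le_add_right _ _)
  -- Moves between `xᵢ` and `x'` never increase the flattening.
  all_goals
    refine .of_le fun v => ?_
    by_cases hv : v = xi <;> simp [flatDist, moveDist, unitDist, hv]
    omega

theorem Relation.ReflTransGen.reaches_flatDist {E E' : Option V → ℕ}
    (h : Relation.ReflTransGen (PebMove (extendGraph G xi)) E E') :
    Reaches G (flatDist xi E) (flatDist xi E') := by
  induction h with
  | refl => exact .of_le le_rfl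
  | tail _ hmove ih => exact ih.trans hmove.reaches_flatDist

variable [Fintype V]

theorem pebTotal_le_pebTotal_flatDist (E : Option V → ℕ) :
    pebTotal E ≤ pebTotal (flatDist xi E) := by
  rw [flatDist, pebTotal_add, pebTotal_unitDist, pebTotal_option]
  omega

theorem reaches_flatDist_iff {E : Option V → ℕ} {s : ℕ} :
    Reaches G (flatDist xi E) (unitDist (2 * s) xi) ↔
      Reaches (extendGraph G xi) E (unitDist s none) := by
  constructor
  · rintro ⟨F, hF, hsF⟩
    obtain ⟨D', f', hD', hFD', htot⟩ := exists_reflTransGen_le_add hF le_rfl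
    have hf' : f' xi ≤ 2 * E none :=
      (le_pebTotal f' xi).trans (htot.trans (pebTotal_unitDist _ xi).le)
    have hD'xi : 2 * (s - E none) ≤ D' xi := by
      have hFxi := hsF xi
      have hFD'xi := hFD' xi
      simp only [unitDist, if_true, Pi.add_apply] at hFxi hFD'xi
      omega
    have hE : liftDist (E none) (E ∘ some) = E := by
      funext o; cases o <;> rfl
    obtain ⟨E', hE', hsE'⟩ := exists_reflTransGen_add_le_of_adj (G := extendGraph G xi)
      (Or.inr (Or.inl ⟨rfl, rfl⟩)) (s - E none) (D := liftDist (E none) D') hD'xi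
    refine ⟨E', hE ▸ (reflTransGen_extendGraph_liftDist _ hD').trans hE', fun o => ?_⟩
    cases o <;> simp [unitDist, liftDist] at hsE' ⊢
    omega
  · rintro ⟨F, hF, hsF⟩
    refine hF.reaches_flatDist.trans (.of_le fun v => ?_)
    have hFnone := hsF none
    by_cases hv : v = xi <;> simp [flatDist, unitDist, hv] at hFnone ⊢
    omega

end Extension

theorem two_s_pebbling_eq_extended_general {V : Type*} [Fintype V] [DecidableEq V]
    (G : SimpleGraph V) (s : ℕ) (xi : V) :
    peb G (unitDist (2 * s) xi)
      = peb (extendGraph G xi) (unitDist s (none : Option V)) := by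
  simp only [peb, pebSet, Set.mem_singleton_iff, forall_eq]
  congr 1
  ext N
  constructor
  · intro hN E hE
    exact reaches_flatDist_iff.1 (hN _ (hE.trans (mod_cast pebTotal_le_pebTotal_flatDist E)))
  · intro hN D hD
    have := reaches_flatDist_iff.2 (hN (liftDist 0 D) ?_)
    · rwa [flatDist_liftDist_zero] at this
    · rwa [pebTotal_liftDist, zero_add]

/-- `π_{2s}(G, xᵢ) = π_s(Gᵢ', x')`. -/
theorem two_s_pebbling_eq_extended {V : Type*} [Fintype V] [DecidableEq V]
    (G : SimpleGraph V) (s : ℕ) (hs : 0 < s) (xi : V) :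
    peb G (unitDist (2 * s) xi)
      = peb (extendGraph G xi) (unitDist s (none : Option V)) :=
  two_s_pebbling_eq_extended_general G s xi
end

section
/- The following two statements about weighted graphs are equivalent: (1) for all weighted graphs G and H, all positive integers s and t, and all vertices x ∈ V(G), y ∈ V(H), π_{st}(G × H, (x, y)) ≤ π_s(G, x) · π_t(H, y); (2) for all weighted graphs G and H and all vertices x ∈ V(G), y ∈ V(H), π(G × H, (x, y)) ≤ π(G, x) · π(H, y). -/
open scoped BigOperators

/-- A weighted graph: a finite simple graph together with a symmetric weight
function assigning a positive integer to each edge. -/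
structure WeightedGraph (V : Type*) where
  toSimpleGraph : SimpleGraph V
  w : V → V → ℕ
  w_symm : ∀ u v, w u v = w v u
  w_pos : ∀ u v, toSimpleGraph.Adj u v → 0 < w u v

/-- A weighted pebbling move along the edge `(u, v)`: remove `w u v` pebbles
from `u` and add one pebble on the adjacent vertex `v`. -/
def WPebMove {V : Type*} [DecidableEq V] (G : WeightedGraph V) (D D' : V → ℕ) : Prop :=
  ∃ u v, G.toSimpleGraph.Adj u v ∧ G.w u v ≤ D u ∧
    D' = fun z => if z = u then D u - G.w u v else if z = v then D v + 1 else D z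

/-- `D'` is reachable from `D` in the weighted graph `G`: some sequence of
weighted pebbling moves starting at `D` produces a distribution containing `D'`. -/
def WReaches {V : Type*} [DecidableEq V] (G : WeightedGraph V) (D D' : V → ℕ) : Prop :=
  ∃ D'', Relation.ReflTransGen (WPebMove G) D D'' ∧ ∀ v, D' v ≤ D'' v

/-- The weighted pebbling number of a set `S` of target distributions. -/
noncomputable def wpebSet {V : Type*} [Fintype V] [DecidableEq V] (G : WeightedGraph V)
    (S : Set (V → ℕ)) : ℕ∞ :=
  sInf {N : ℕ∞ | ∀ D₀ : V → ℕ, N ≤ (pebTotal D₀ : ℕ∞) → ∀ D ∈ S, WReaches G D₀ D}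

/-- The weighted pebbling number of a single target distribution. -/
noncomputable def wpeb {V : Type*} [Fintype V] [DecidableEq V] (G : WeightedGraph V)
    (D : V → ℕ) : ℕ∞ :=
  wpebSet G {D}

open SimpleGraph in
/-- The Cartesian product of two weighted graphs. -/
def WeightedGraph.boxProd {V W : Type*} [DecidableEq V]
    (G : WeightedGraph V) (H : WeightedGraph W) : WeightedGraph (V × W) where
  toSimpleGraph := G.toSimpleGraph □ H.toSimpleGraph
  w := fun p q => if p.1 = q.1 then H.w p.2 q.2 else G.w p.1 q.1
  w_symm := by
    intro p q
    show (if p.1 = q.1 then H.w p.2 q.2 else G.w p.1 q.1)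
        = (if q.1 = p.1 then H.w q.2 p.2 else G.w q.1 p.1)
    by_cases h : p.1 = q.1
    · rw [if_pos h, if_pos h.symm, H.w_symm]
    · rw [if_neg h, if_neg (fun hh => h hh.symm), G.w_symm]
  w_pos := by
    intro p q hpq
    rcases (SimpleGraph.boxProd_adj).mp hpq with ⟨hadj, _⟩ | ⟨hadj, heq⟩
    · have hne : p.1 ≠ q.1 := hadj.ne
      simpa [hne] using G.w_pos _ _ hadj
    · simpa [heq] using H.w_pos _ _ hadj

/-!
Attach to `G` a pendant vertex `x⁺` joined to `x` by an edge of weight `s`, and to `H` a pendant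
vertex `y⁺` joined to `y` by an edge of weight `t`. Getting a pebble to `x⁺` is the same as
getting `s` pebbles to `x`, so `π(G⁺, x⁺) ≤ π_s(G, x)`. In `G⁺ □ H⁺`, value a pebble on `(a, b)`
as `s^[a = x⁺] · t^[b = y⁺]` pebbles on the vertex of `G □ H` obtained by collapsing `x⁺` to `x`
and `y⁺` to `y`. Every move of `G⁺ □ H⁺` is then dominated by a batch of moves of `G □ H`, and
one pebble on `(x⁺, y⁺)` is worth `s t` pebbles on `(x, y)`, so
`π_{st}(G □ H, (x, y)) ≤ π(G⁺ □ H⁺, (x⁺, y⁺))`. The case `s = t = 1` applied to `G⁺` and `H⁺`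
now gives the general case.
-/
section Reaches

variable {V : Type*} [DecidableEq V] {G : WeightedGraph V}

lemma wPebMove_iff {D D' : V → ℕ} :
    WPebMove G D D' ↔ ∃ u v, ∃ R : V → ℕ, G.toSimpleGraph.Adj u v ∧
      D = R + Pi.single u (G.w u v) ∧ D' = R + Pi.single v 1 := by
  constructor
  · rintro ⟨u, v, hadj, hw, rfl⟩
    have := hadj.ne
    refine ⟨u, v, D - Pi.single u (G.w u v), hadj, ?_, ?_⟩ <;> funext z <;>
      simp only [Pi.add_apply, Pi.sub_apply, Pi.single_apply] <;> split_ifs <;> grind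
  · rintro ⟨u, v, R, hadj, rfl, rfl⟩
    have := hadj.ne
    refine ⟨u, v, hadj, by simp, ?_⟩
    funext z
    simp only [Pi.add_apply, Pi.single_apply]
    split_ifs <;> grind

lemma reflTransGen_wPebMove_add_right {D D' : V → ℕ}
    (h : Relation.ReflTransGen (WPebMove G) D D') (R : V → ℕ) :
    Relation.ReflTransGen (WPebMove G) (D + R) (D' + R) := by
  induction h with
  | refl => rfl
  | tail _ hmove ih =>
    obtain ⟨u, v, R₀, hadj, rfl, rfl⟩ := wPebMove_iff.mp hmove
    refine ih.tail (wPebMove_iff.mpr ⟨u, v, R₀ + R, hadj, ?_, ?_⟩) <;> abel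

lemma wReaches_of_le {D D' : V → ℕ} (h : D' ≤ D) : WReaches G D D' := ⟨D, .refl, h⟩

lemma WReaches.add_right {D D' : V → ℕ} (h : WReaches G D D') (R : V → ℕ) :
    WReaches G (D + R) (D' + R) :=
  let ⟨D'', hD'', (hle : D' ≤ D'')⟩ := h
  ⟨D'' + R, reflTransGen_wPebMove_add_right hD'' R, add_le_add_left hle R⟩

lemma WReaches.trans {D₁ D₂ D₃ : V → ℕ} (h₁₂ : WReaches G D₁ D₂) (h₂₃ : WReaches G D₂ D₃) :
    WReaches G D₁ D₃ := by
  obtain ⟨D₂', h₁, hle₂ : D₂ ≤ D₂'⟩ := h₁₂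
  obtain ⟨D₃', h₂, hle₃ : D₃ ≤ D₃'⟩ := h₂₃
  -- the surplus `D₂' - D₂` is carried along unused
  refine ⟨D₃' + (D₂' - D₂), h₁.trans ?_, hle₃.trans le_self_add⟩
  simpa only [add_tsub_cancel_of_le hle₂] using reflTransGen_wPebMove_add_right h₂ (D₂' - D₂)

lemma WReaches.add {D₁ D₁' D₂ D₂' : V → ℕ} (h₁ : WReaches G D₁ D₁') (h₂ : WReaches G D₂ D₂') :
    WReaches G (D₁ + D₂) (D₁' + D₂') := by
  refine (h₁.add_right D₂).trans ?_
  simpa only [add_comm D₁'] using h₂.add_right D₁'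

lemma wReaches_single_mul_w {u v : V} (hadj : G.toSimpleGraph.Adj u v) (n : ℕ) :
    WReaches G (Pi.single u (n * G.w u v)) (Pi.single v n) := by
  induction n with
  | zero => exact wReaches_of_le (by simp)
  | succ n ih =>
    have hmove : WPebMove G (Pi.single u (G.w u v)) (Pi.single v 1) :=
      wPebMove_iff.mpr ⟨u, v, 0, hadj, (zero_add _).symm, (zero_add _).symm⟩
    rw [add_mul, one_mul, Pi.single_add, Pi.single_add]
    exact ih.add ⟨_, .single hmove, fun _ => le_rfl⟩

end Reaches

section Push

variable {V V' V'' : Type*} [Fintype V'] [DecidableEq V]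

def pushDist (f : V' → V) (μ : V' → ℕ) (D : V' → ℕ) : V → ℕ :=
  fun v => ∑ a with f a = v, μ a * D a

variable {f : V' → V} {μ : V' → ℕ}

lemma pushDist_add (D E : V' → ℕ) : pushDist f μ (D + E) = pushDist f μ D + pushDist f μ E := by
  funext v
  simp only [pushDist, Pi.add_apply, mul_add, Finset.sum_add_distrib]

lemma pushDist_mono {D E : V' → ℕ} (h : D ≤ E) : pushDist f μ D ≤ pushDist f μ E :=
  fun _ => Finset.sum_le_sum fun a _ => Nat.mul_le_mul_left _ (h a)

lemma pushDist_single [DecidableEq V'] (a : V') (n : ℕ) :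
    pushDist f μ (Pi.single a n) = Pi.single (f a) (μ a * n) := by
  funext v
  simp [pushDist, Pi.single_apply, eq_comm]

lemma pushDist_pushDist [Fintype V''] [DecidableEq V'] (g : V'' → V') (ν : V'' → ℕ)
    (D : V'' → ℕ) :
    pushDist f μ (pushDist g ν D) = pushDist (f ∘ g) (fun a => μ (g a) * ν a) D := by
  funext v
  simp only [pushDist, Finset.mul_sum]
  calc ∑ b with f b = v, ∑ a with g a = b, μ b * (ν a * D a)
      = ∑ b with f b = v, ∑ a with g a = b, μ (g a) * ν a * D a :=
        Finset.sum_congr rfl fun b _ => Finset.sum_congr rfl fun a ha => by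
          rw [(Finset.mem_filter.1 ha).2, mul_assoc]
    _ = _ := by
      rw [Finset.sum_fiberwise_eq_sum_filter]
      simp

lemma pushDist_id_one [Fintype V] (D : V → ℕ) : pushDist id 1 D = D := by
  funext v
  simp [pushDist, Finset.sum_filter]

lemma pebTotal_pushDist [Fintype V] (D : V' → ℕ) : pebTotal (pushDist f μ D) = ∑ a, μ a * D a :=
  Finset.sum_fiberwise _ _ _

end Push

section Projection

variable {V V' : Type*} [DecidableEq V]

/-- A pebble on `a` in `G'` is worth `μ a` pebbles on `f a` in `G`, and no move of `G'`
gains value that `G` cannot realise. -/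
def IsPebbleProjection (G' : WeightedGraph V') (G : WeightedGraph V) (f : V' → V)
    (μ : V' → ℕ) : Prop :=
  ∀ a b, G'.toSimpleGraph.Adj a b →
    (f a = f b ∧ μ b ≤ μ a * G'.w a b) ∨
      (G.toSimpleGraph.Adj (f a) (f b) ∧ μ b * G.w (f a) (f b) ≤ μ a * G'.w a b)

variable {G' : WeightedGraph V'} {G : WeightedGraph V} {f : V' → V} {μ : V' → ℕ}

lemma IsPebbleProjection.wReaches_single (hp : IsPebbleProjection G' G f μ) {a b : V'}
    (hab : G'.toSimpleGraph.Adj a b) :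
    WReaches G (Pi.single (f a) (μ a * G'.w a b)) (Pi.single (f b) (μ b)) := by
  rcases hp a b hab with ⟨hfab, hμ⟩ | ⟨hadj, hμ⟩
  · exact wReaches_of_le (hfab ▸ Pi.single_mono _ hμ)
  · exact (wReaches_of_le (Pi.single_mono _ hμ)).trans (wReaches_single_mul_w hadj _)

lemma IsPebbleProjection.wReaches_pushDist [Fintype V'] [DecidableEq V']
    (hp : IsPebbleProjection G' G f μ) {D D' : V' → ℕ} (h : WReaches G' D D') :
    WReaches G (pushDist f μ D) (pushDist f μ D') := by
  obtain ⟨D'', hD'', hle : D' ≤ D''⟩ := h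
  have hpush : WReaches G (pushDist f μ D) (pushDist f μ D'') := by
    clear hle
    induction hD'' with
    | refl => exact wReaches_of_le le_rfl
    | tail _ hmove ih =>
      obtain ⟨a, b, R, hab, rfl, rfl⟩ := wPebMove_iff.mp hmove
      refine ih.trans ?_
      rw [pushDist_add, pushDist_add, pushDist_single, pushDist_single, mul_one]
      exact (wReaches_of_le le_rfl).add (hp.wReaches_single hab)
  exact hpush.trans (wReaches_of_le (pushDist_mono hle))

end Projection

namespace WeightedGraph

variable {V : Type*}

/-- `G` with a new vertex `none` joined to `x` by an edge of weight `s`. -/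
def addPendant (G : WeightedGraph V) (x : V) (s : ℕ) (hs : 0 < s) :
    WeightedGraph (Option V) where
  toSimpleGraph :=
    { Adj := fun
        | some u, some v => G.toSimpleGraph.Adj u v
        | some u, none | none, some u => u = x
        | none, none => False
      symm := ⟨fun
        | some _, some _, h => h.symm
        | some _, none, h | none, some _, h => h⟩
      loopless := ⟨fun
        | some _, h => h.ne rfl
        | none, h => h⟩ }
  w := fun
    | some u, some v => G.w u v
    | _, _ => s
  w_symm := fun
    | some u, some v => G.w_symm u v
    | some _, none | none, some _ | none, none => rfl
  w_pos := fun
    | some u, some v, h => G.w_pos u v h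
    | some _, none, _ | none, some _, _ => hs

variable (G : WeightedGraph V) (x : V) {s : ℕ} (hs : 0 < s)

lemma isPebbleProjection_some_addPendant :
    IsPebbleProjection G (G.addPendant x s hs) some 1 :=
  fun _ _ hadj => .inr ⟨hadj, le_rfl⟩

lemma isPebbleProjection_addPendant_getD :
    IsPebbleProjection (G.addPendant x s hs) G (·.getD x) (Option.elim · s fun _ => 1)
  | some _, some _, hadj => .inr ⟨hadj, by simp [addPendant]⟩
  | some _, none, rfl => .inl ⟨rfl, by simp [addPendant]⟩
  | none, some _, rfl => .inl ⟨rfl, Nat.mul_pos hs hs⟩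

end WeightedGraph

lemma IsPebbleProjection.boxProd {V W V' W' : Type*} [DecidableEq V] [DecidableEq V']
    {G : WeightedGraph V} {G' : WeightedGraph V'} {H : WeightedGraph W} {H' : WeightedGraph W'}
    {f : V' → V} {g : W' → W} {μ : V' → ℕ} {ν : W' → ℕ}
    (hG : IsPebbleProjection G' G f μ) (hH : IsPebbleProjection H' H g ν) :
    IsPebbleProjection (G'.boxProd H') (G.boxProd H) (Prod.map f g) fun p => μ p.1 * ν p.2 := by
  rintro ⟨a, b⟩ ⟨c, d⟩ hadj
  rcases SimpleGraph.boxProd_adj.mp hadj with ⟨hac, rfl : b = d⟩ | ⟨hbd, rfl : a = c⟩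
  · have hw' : (G'.boxProd H').w (a, b) (c, b) = G'.w a c := if_neg hac.ne
    simp only [Prod.map, hw']
    rcases hG a c hac with ⟨hf, hμ⟩ | ⟨hfac, hμ⟩
    · refine .inl ⟨by rw [hf], ?_⟩
      nlinarith
    · have hw : (G.boxProd H).w (f a, g b) (f c, g b) = G.w (f a) (f c) := if_neg hfac.ne
      refine .inr ⟨SimpleGraph.boxProd_adj.mpr (.inl ⟨hfac, rfl⟩), ?_⟩
      rw [hw]
      nlinarith
  · have hw' : (G'.boxProd H').w (a, b) (a, d) = H'.w b d := if_pos rfl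
    simp only [Prod.map, hw']
    rcases hH b d hbd with ⟨hg, hν⟩ | ⟨hgbd, hν⟩
    · refine .inl ⟨by rw [hg], ?_⟩
      nlinarith
    · have hw : (G.boxProd H).w (f a, g b) (f a, g d) = H.w (g b) (g d) := if_pos rfl
      refine .inr ⟨SimpleGraph.boxProd_adj.mpr (.inr ⟨hgbd, rfl⟩), ?_⟩
      rw [hw]
      nlinarith

lemma unitDist_eq_single {V : Type*} [DecidableEq V] (t : ℕ) (v : V) :
    unitDist t v = Pi.single v t := by
  funext w
  simp [unitDist, Pi.single_apply]

section PebblingNumber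

variable {V : Type*} [Fintype V] [DecidableEq V] {G : WeightedGraph V} {D D₀ : V → ℕ}

lemma wpeb_le_of_forall {N : ℕ∞} (h : ∀ D₀ : V → ℕ, N ≤ pebTotal D₀ → WReaches G D₀ D) :
    wpeb G D ≤ N :=
  sInf_le fun D₀ hD₀ _ hD => hD ▸ h D₀ hD₀

/-- The infimum defining `wpeb` is attained, since `ℕ∞` is well-ordered and `⊤` always
qualifies. -/
lemma wReaches_of_wpeb_le (h : wpeb G D ≤ pebTotal D₀) : WReaches G D₀ D := by
  have hmem := csInf_mem (s := {N : ℕ∞ | ∀ D₀ : V → ℕ, N ≤ (pebTotal D₀ : ℕ∞) →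
    ∀ D' ∈ ({D} : Set (V → ℕ)), WReaches G D₀ D'}) ⟨⊤, fun D₀ h => by simp at h⟩
  exact hmem D₀ h D rfl

end PebblingNumber

namespace WeightedGraph

variable {V W : Type*} [Fintype V] [DecidableEq V] [Fintype W] [DecidableEq W]

lemma wpeb_addPendant_le (G : WeightedGraph V) (x : V) {s : ℕ} (hs : 0 < s) :
    wpeb (G.addPendant x s hs) (unitDist 1 none) ≤ wpeb G (unitDist s x) := by
  refine wpeb_le_of_forall fun D₀ hD₀ => ?_
  rw [unitDist_eq_single]
  by_cases hnone : D₀ none = 0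
  · have hlift : pushDist some 1 (D₀ ∘ some) = D₀ := by
      funext o
      cases o <;> simp [pushDist, Finset.sum_filter, hnone]
    have htotal : pebTotal D₀ = pebTotal (D₀ ∘ some) := by
      simp [pebTotal, Fintype.sum_option, hnone]
    have hreach := (G.isPebbleProjection_some_addPendant x hs).wReaches_pushDist
      (wReaches_of_wpeb_le (D₀ := D₀ ∘ some) (htotal ▸ hD₀))
    rw [hlift, unitDist_eq_single, pushDist_single, Pi.one_apply, one_mul] at hreach
    have hmove : WReaches (G.addPendant x s hs) (Pi.single (some x) (1 * s)) (Pi.single none 1) :=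
      wReaches_single_mul_w (v := none) rfl 1
    exact hreach.trans (by simpa using hmove)
  · refine wReaches_of_le fun o => ?_
    cases o with
    | none => simpa [Nat.one_le_iff_ne_zero] using hnone
    | some v => simp

lemma wpeb_boxProd_le_wpeb_boxProd_addPendant (G : WeightedGraph V) (H : WeightedGraph W)
    (x : V) (y : W) {s t : ℕ} (hs : 0 < s) (ht : 0 < t) :
    wpeb (G.boxProd H) (unitDist (s * t) (x, y))
      ≤ wpeb ((G.addPendant x s hs).boxProd (H.addPendant y t ht)) (unitDist 1 (none, none)) := by
  refine wpeb_le_of_forall fun D₀ hD₀ => ?_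
  set D₀' := pushDist (Prod.map some some) 1 D₀ with hD₀'
  have htotal : pebTotal D₀' = pebTotal D₀ := by
    rw [hD₀', pebTotal_pushDist]
    simp [pebTotal]
  have hcollapse : pushDist (Prod.map (·.getD x) (·.getD y))
      (fun p => Option.elim p.1 s (fun _ => 1) * Option.elim p.2 t (fun _ => 1)) D₀' = D₀ := by
    rw [pushDist_pushDist]
    convert pushDist_id_one D₀ using 2
    · rfl
    · funext p
      simp
  have hreach := ((G.isPebbleProjection_addPendant_getD x hs).boxProd
    (H.isPebbleProjection_addPendant_getD y ht)).wReaches_pushDist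
      (wReaches_of_wpeb_le (D₀ := D₀') (htotal ▸ hD₀))
  rwa [hcollapse, unitDist_eq_single, pushDist_single, mul_one, ← unitDist_eq_single] at hreach

end WeightedGraph

/-- For weighted graphs, the Graham-type inequality for all positive `s, t` and
all target vertices is equivalent to the case `s = t = 1`. -/
theorem weighted_st_iff_weighted_one :
    (∀ (V W : Type) [Fintype V] [DecidableEq V] [Fintype W] [DecidableEq W]
        (G : WeightedGraph V) (H : WeightedGraph W) (s t : ℕ), 0 < s → 0 < t →
        ∀ (x : V) (y : W),
        wpeb (G.boxProd H) (unitDist (s * t) (x, y))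
          ≤ wpeb G (unitDist s x) * wpeb H (unitDist t y)) ↔
    (∀ (V W : Type) [Fintype V] [DecidableEq V] [Fintype W] [DecidableEq W]
        (G : WeightedGraph V) (H : WeightedGraph W) (x : V) (y : W),
        wpeb (G.boxProd H) (unitDist 1 (x, y))
          ≤ wpeb G (unitDist 1 x) * wpeb H (unitDist 1 y)) := by
  refine ⟨fun h V W _ _ _ _ G H x y => by simpa using h V W G H 1 1 one_pos one_pos x y,
    fun h V W _ _ _ _ G H s t hs ht x y => ?_⟩
  calc wpeb (G.boxProd H) (unitDist (s * t) (x, y))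
      ≤ wpeb ((G.addPendant x s hs).boxProd (H.addPendant y t ht)) (unitDist 1 (none, none)) :=
        G.wpeb_boxProd_le_wpeb_boxProd_addPendant H x y hs ht
    _ ≤ wpeb (G.addPendant x s hs) (unitDist 1 none)
          * wpeb (H.addPendant y t ht) (unitDist 1 none) :=
        h _ _ _ _ none none
    _ ≤ wpeb G (unitDist s x) * wpeb H (unitDist t y) :=
        mul_le_mul' (G.wpeb_addPendant_le x hs) (H.wpeb_addPendant_le y ht)
end
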